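/- arXiv:2111.06505 — 6 statements merged into one kernel-verified Lean document; each statement's English description precedes it below -/
import Mathlib

section
/- Let M be a 3×n real matrix (n ≥ 3) whose first three columns are linearly independent, let U be an n×1 vector with its first three entries strictly positive and all other entries nonnegative, and set P = MU. Then there exists ε > 0 such that for any 3×n matrix M' with every entry within ε of the corresponding entry of M, there exists an n×1 vector U' with M'U' = P, whose first three entries are strictly positive and all other entries equal the corresponding entries of U (in particular nonnegative). -/
/-!
Let `A N` be the square submatrix of `N` on the columns `e`. Keeping the other coordinates of `u`
(the vector `extend e x u`), `N *ᵥ extend e x u = M *ᵥ u` is the square system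
`A N *ᵥ x = M *ᵥ u - N *ᵥ u₀`, with `u₀` equal to `u` off the range of `e` and zero on it.
As `A M` is invertible, for `N` near `M` its solution `(A N)⁻¹ *ᵥ (M *ᵥ u - N *ᵥ u₀)` exists and
depends continuously on `N`; at `N = M` it is the positive vector `u ∘ e`, so it stays positive.
-/

open Function Filter Topology

theorem Function.extend_comp_self {α β γ : Type*} (e : α → β) (u : β → γ) :
    extend e (u ∘ e) u = u := by
  classical
  ext j
  by_cases hj : ∃ k, e k = j
  · rw [extend_def, dif_pos hj, comp_apply, hj.choose_spec]
  · exact extend_apply' _ _ _ hj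

namespace Matrix

section

attribute [local instance] Matrix.normedAddCommGroup

theorem exists_pos_forall_abs_sub_lt_of_eventually {m n : Type*} [Fintype m] [Fintype n]
    {M : Matrix m n ℝ} {p : Matrix m n ℝ → Prop} (h : ∀ᶠ N in 𝓝 M, p N) :
    ∃ ε > 0, ∀ N, (∀ i j, |N i j - M i j| < ε) → p N := by
  obtain ⟨ε, hε, hball⟩ := Metric.eventually_nhds_iff_ball.mp h
  refine ⟨ε, hε, fun N hN => hball N ?_⟩
  rw [Metric.mem_ball, dist_eq_norm, norm_lt_iff hε]
  exact hN

end

variable {κ ι : Type*} [Fintype κ] [Fintype ι]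

theorem mulVec_extend_zero {e : κ → ι} (he : Injective e) (N : Matrix κ ι ℝ) (x : κ → ℝ) :
    N *ᵥ extend e x 0 = N.submatrix id e *ᵥ x := by
  ext i
  refine (Fintype.sum_of_injective e he _ _ (fun j hj => ?_) fun k => ?_).symm
  · rw [extend_apply' _ _ _ hj, Pi.zero_apply, mul_zero]
  · rw [he.extend_apply]
    rfl

theorem mulVec_extend {e : κ → ι} (he : Injective e) (N : Matrix κ ι ℝ) (x : κ → ℝ)
    (u : ι → ℝ) : N *ᵥ extend e x u = N.submatrix id e *ᵥ x + N *ᵥ extend e 0 u := by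
  rw [← mulVec_extend_zero he, ← mulVec_add, ← extend_add, add_zero, zero_add]

variable [DecidableEq κ]

theorem eventually_exists_pos_mulVec_extend_eq {e : κ → ι} (he : Injective e)
    {M : Matrix κ ι ℝ} (hM : IsUnit (M.submatrix id e)) {u : ι → ℝ} (hu : ∀ k, 0 < u (e k)) :
    ∀ᶠ N in 𝓝 M, ∃ x : κ → ℝ, N *ᵥ extend e x u = M *ᵥ u ∧ ∀ k, 0 < x k := by
  set A : Matrix κ ι ℝ → Matrix κ κ ℝ := fun N => N.submatrix id e
  set x : Matrix κ ι ℝ → κ → ℝ := fun N => (A N)⁻¹ *ᵥ (M *ᵥ u - N *ᵥ extend e 0 u)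
  have hdet : IsUnit (A M).det := (isUnit_iff_isUnit_det _).mp hM
  have hA : Continuous A := continuous_id.matrix_submatrix _ _
  have hx : ContinuousAt x M := by
    have hinv : ContinuousAt (fun N => (A N)⁻¹) M :=
      (continuousAt_matrix_inv _ (NormedRing.inverse_continuousAt hdet.unit)).comp
        hA.continuousAt
    have hrhs : Continuous fun N : Matrix κ ι ℝ => M *ᵥ u - N *ᵥ extend e 0 u :=
      continuous_const.sub (continuous_id.matrix_mulVec continuous_const)
    exact (continuous_fst.matrix_mulVec continuous_snd).continuousAt.comp
      (hinv.prodMk hrhs.continuousAt)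
  have hxM : x M = u ∘ e := by
    have : M *ᵥ u - M *ᵥ extend e 0 u = A M *ᵥ (u ∘ e) := by
      nth_rw 1 [← extend_comp_self e u]
      rw [mulVec_extend he, add_sub_cancel_right]
    simp only [x, this, mulVec_mulVec, nonsing_inv_mul _ hdet, one_mulVec]
  have hunit : ∀ᶠ N in 𝓝 M, IsUnit (A N).det :=
    (hA.matrix_det.continuousAt.eventually_ne hdet.ne_zero).mono fun _ h => h.isUnit
  have hpos : ∀ᶠ N in 𝓝 M, ∀ k, 0 < x N k := eventually_all.2 fun k =>
    ((continuous_apply k).continuousAt.comp hx).eventually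
      (eventually_gt_nhds (by simpa [hxM] using hu k))
  filter_upwards [hunit, hpos] with N hN hxN
  refine ⟨x N, ?_, hxN⟩
  rw [mulVec_extend he, mulVec_mulVec, mul_nonsing_inv _ hN, one_mulVec, sub_add_cancel]

end Matrix

theorem stmt_6_general (n : ℕ) (hn : 3 ≤ n) (M : Matrix (Fin 3) (Fin n) ℝ) (U : Fin n → ℝ)
    (hind : LinearIndependent ℝ (fun j : Fin 3 => fun i : Fin 3 => M i (Fin.castLE hn j)))
    (hUpos : ∀ i : Fin n, (i : ℕ) < 3 → 0 < U i) :
    ∃ ε > 0, ∀ M' : Matrix (Fin 3) (Fin n) ℝ,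
      (∀ i j, |M' i j - M i j| < ε) →
      ∃ U' : Fin n → ℝ, M'.mulVec U' = M.mulVec U ∧
        (∀ i : Fin n, (i : ℕ) < 3 → 0 < U' i) ∧
        (∀ i : Fin n, 3 ≤ (i : ℕ) → U' i = U i) := by
  have he := Fin.castLE_injective hn
  have hA : IsUnit (M.submatrix id (Fin.castLE hn)) :=
    Matrix.linearIndependent_cols_iff_isUnit.mp hind
  obtain ⟨ε, hε, hsolve⟩ := Matrix.exists_pos_forall_abs_sub_lt_of_eventually
    (Matrix.eventually_exists_pos_mulVec_extend_eq he hA fun k => hUpos _ k.isLt)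
  refine ⟨ε, hε, fun M' hM' => ?_⟩
  obtain ⟨x, hx, hxpos⟩ := hsolve M' hM'
  refine ⟨extend (Fin.castLE hn) x U, hx, fun i hi => ?_, fun i hi => ?_⟩
  · rw [show i = Fin.castLE hn ⟨i, hi⟩ from rfl, he.extend_apply]
    exact hxpos _
  · refine extend_apply' _ _ _ ?_
    rintro ⟨k, rfl⟩
    exact (Fin.val_castLE hn k ▸ hi).not_gt k.isLt

/-- Perturbation lemma: if the first three columns of a 3×n real matrix `M` are
linearly independent, `U` has its first three entries positive and the rest
nonnegative, and `P = MU`, then any matrix `M'` entrywise close enough to `M`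
admits `U'` with `M'U' = P`, first three entries positive and the remaining
entries equal to those of `U`. -/
theorem stmt_6 (n : ℕ) (hn : 3 ≤ n) (M : Matrix (Fin 3) (Fin n) ℝ) (U : Fin n → ℝ)
    (hind : LinearIndependent ℝ (fun j : Fin 3 => fun i : Fin 3 => M i (Fin.castLE hn j)))
    (hUpos : ∀ i : Fin n, (i : ℕ) < 3 → 0 < U i)
    (hUnn : ∀ i : Fin n, 3 ≤ (i : ℕ) → 0 ≤ U i) :
    ∃ ε > 0, ∀ M' : Matrix (Fin 3) (Fin n) ℝ,
      (∀ i j, |M' i j - M i j| < ε) →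
      ∃ U' : Fin n → ℝ, M'.mulVec U' = M.mulVec U ∧
        (∀ i : Fin n, (i : ℕ) < 3 → 0 < U' i) ∧
        (∀ i : Fin n, 3 ≤ (i : ℕ) → U' i = U i) :=
  stmt_6_general n hn M U hind hUpos
end

section
/- For all positive rationals a, b, all natural numbers p, r, s with 0 < r < s < p, there exist a positive integer k and strictly positive rationals c₁, c₂, c₃ and distinct natural numbers i₁, i₂, i₃ each less than p·k such that a(pn+r)³ + b(pn+s)³ = c₁(pkn + i₁)³ + c₂(pkn + i₂)³ + c₃(pkn + i₃)³ as polynomials in n. -/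
lemma key_identity (a b r s x m : ℚ) (ha : 0 < a) (hb : 0 < b) (hrs : r < s)
    (hm : 0 < m) :
    a*(x+r)^3 + b*(x+s)^3 =
      a*b*(s-r)^2/(4*(2*(s-r)*b+a+b)*((s-r)+1)*m^3) * (2*m*x + 2*m*r - m)^3
      + (2*(s-r)+1)*(a+b)^3/((2*(s-r)*b+a+b)*(2*(s-r)*a+a+b)*(2*m)^3)
          * (2*m*x + 2*m*r + 2*(m*((s-r)*b/(a+b))))^3
      + a*b*(s-r)^2/(4*((s-r)+1)*(2*(s-r)*a+a+b)*m^3) * (2*m*x + 2*m*s + m)^3 := by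
  have hD : 0 < s - r := by linarith
  have hab : a + b ≠ 0 := by positivity
  have h1 : 2*(s-r)*b+a+b ≠ 0 := by positivity
  have h2 : (s-r)+1 ≠ 0 := by positivity
  have h3 : 2*(s-r)*a+a+b ≠ 0 := by positivity
  have hm' : m ≠ 0 := hm.ne'
  field_simp
  ring

/-- Every 2-transform `a(pn+r)³ + b(pn+s)³` of `n³` with `0 < r < s < p` can be
rewritten as a 3-transform of `n³`. -/
theorem stmt_8 (a b : ℚ) (ha : 0 < a) (hb : 0 < b) (p r s : ℕ)
    (hr : 0 < r) (hrs : r < s) (hsp : s < p) :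
    ∃ k : ℕ, 0 < k ∧ ∃ c₁ c₂ c₃ : ℚ, 0 < c₁ ∧ 0 < c₂ ∧ 0 < c₃ ∧
      ∃ i₁ i₂ i₃ : ℕ, i₁ ≠ i₂ ∧ i₁ ≠ i₃ ∧ i₂ ≠ i₃ ∧
        i₁ < p*k ∧ i₂ < p*k ∧ i₃ < p*k ∧
        ∀ n : ℚ, a*((p:ℚ)*n+r)^3 + b*((p:ℚ)*n+s)^3 =
          c₁*((p:ℚ)*(k:ℚ)*n + i₁)^3 + c₂*((p:ℚ)*(k:ℚ)*n + i₂)^3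
            + c₃*((p:ℚ)*(k:ℚ)*n + i₃)^3 := by
  set rq : ℚ := (r : ℚ) with hrq
  set sq : ℚ := (s : ℚ) with hsq
  have hrsq : rq < sq := by rw [hrq, hsq]; exact_mod_cast hrs
  have hDq : 0 < sq - rq := by linarith
  set w : ℚ := (sq - rq) * b / (a + b) with hw
  have hw0 : 0 < w := by positivity
  have hwD : w < sq - rq := by
    rw [hw, div_lt_iff₀ (by positivity)]
    nlinarith
  set M : ℕ := w.den with hM
  have hM0 : 0 < M := w.pos
  have hMq : (0:ℚ) < (M:ℚ) := by exact_mod_cast hM0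
  set N : ℕ := w.num.toNat with hN
  have hnum : 0 < w.num := Rat.num_pos.mpr hw0
  have hNq : (N:ℚ) = (M:ℚ) * w := by
    have h1 : ((N:ℤ):ℚ) = (w.num : ℚ) := by
      rw [hN, Int.toNat_of_nonneg hnum.le]
    have hden : ((w.den:ℚ)) ≠ 0 := by
      exact_mod_cast w.den_nz
    have h2 : (w.num : ℚ) = w * w.den :=
      (div_eq_iff hden).mp (Rat.num_div_den w)
    push_cast at h1 ⊢
    rw [h1, h2, ← hM]
    ring
  have hNM : N < M * (s - r) := by
    have hcast : ((M * (s - r) : ℕ) : ℚ) = (M:ℚ) * (sq - rq) := by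
      push_cast [Nat.sub_add_cancel, hrs.le]
      ring
    have : (N:ℚ) < ((M * (s - r) : ℕ) : ℚ) := by
      rw [hNq, hcast]
      exact mul_lt_mul_of_pos_left hwD hMq
    exact_mod_cast this
  have hN0 : 0 < N := by
    rw [hN]
    omega
  refine ⟨2 * M, by omega,
    a*b*(sq-rq)^2/(4*(2*(sq-rq)*b+a+b)*((sq-rq)+1)*(M:ℚ)^3),
    (2*(sq-rq)+1)*(a+b)^3/((2*(sq-rq)*b+a+b)*(2*(sq-rq)*a+a+b)*(2*(M:ℚ))^3),
    a*b*(sq-rq)^2/(4*((sq-rq)+1)*(2*(sq-rq)*a+a+b)*(M:ℚ)^3),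
    by positivity, by positivity, by positivity,
    2*M*r - M, 2*M*r + 2*N, 2*M*s + M, ?_, ?_, ?_, ?_, ?_, ?_, ?_⟩
  · -- i₁ ≠ i₂
    have : 2*M*r - M < 2*M*r + 2*N := by
      have : M ≤ 2*M*r := by nlinarith
      omega
    omega
  · have h1 : 2*M*r - M < 2*M*s + M := by
      have : 2*M*r ≤ 2*M*s := by nlinarith
      omega
    omega
  · -- i₂ ≠ i₃ : 2Mr + 2N < 2Ms + M
    have : 2*N < 2*(M*(s-r)) := by omega
    have h2 : 2*M*r + 2*(M*(s-r)) = 2*M*s := by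
      have : r ≤ s := hrs.le
      zify [this]; ring
    omega
  · -- i₁ < p * (2M)
    have : 2*M*r ≤ 2*M*s := by nlinarith
    have h3 : 2*M*s + M < p*(2*M) := by nlinarith
    omega
  · have : 2*N < 2*(M*(s-r)) := by omega
    have h2 : 2*M*r + 2*(M*(s-r)) = 2*M*s := by
      have : r ≤ s := hrs.le
      zify [hrs.le]; ring
    have h3 : 2*M*s + M < p*(2*M) := by nlinarith
    omega
  · have h3 : 2*M*s + M < p*(2*M) := by nlinarith
    omega
  · intro n
    have hk : ((2*M : ℕ) : ℚ) = 2*(M:ℚ) := by push_cast; ring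
    have hi1 : ((2*M*r - M : ℕ) : ℚ) = 2*(M:ℚ)*rq - M := by
      have hle : M ≤ 2*M*r := by nlinarith
      push_cast [hle]
      ring
    have hi2 : ((2*M*r + 2*N : ℕ) : ℚ) = 2*(M:ℚ)*rq + 2*((M:ℚ)*w) := by
      push_cast
      rw [hNq]
    have hi3 : ((2*M*s + M : ℕ) : ℚ) = 2*(M:ℚ)*sq + M := by
      push_cast; ring
    rw [hk, hi1, hi2, hi3]
    have := key_identity a b rq sq ((p:ℚ)*n) (M:ℚ) ha hb hrsq hMq
    calc a*((p:ℚ)*n+rq)^3 + b*((p:ℚ)*n+sq)^3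
        = a*b*(sq-rq)^2/(4*(2*(sq-rq)*b+a+b)*((sq-rq)+1)*(M:ℚ)^3)
            * (2*(M:ℚ)*((p:ℚ)*n) + 2*(M:ℚ)*rq - (M:ℚ))^3
          + (2*(sq-rq)+1)*(a+b)^3/((2*(sq-rq)*b+a+b)*(2*(sq-rq)*a+a+b)*(2*(M:ℚ))^3)
            * (2*(M:ℚ)*((p:ℚ)*n) + 2*(M:ℚ)*rq + 2*((M:ℚ)*((sq-rq)*b/(a+b))))^3
          + a*b*(sq-rq)^2/(4*((sq-rq)+1)*(2*(sq-rq)*a+a+b)*(M:ℚ)^3)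
            * (2*(M:ℚ)*((p:ℚ)*n) + 2*(M:ℚ)*sq + (M:ℚ))^3 := this
      _ = _ := by ring
end

section
/- For all positive rationals a, b and natural numbers p, s with 0 < s < p, there exist a positive integer k, an integer t, strictly positive rationals c₁, c₂, c₃, and distinct natural numbers i₁, i₂, i₃ each less than pk such that a(pn)³ + b(pn+s)³ = c₁(pkn + i₁ + t)³ + c₂(pkn + i₂ + t)³ + c₃(pkn + i₃ + t)³ as polynomials in n. -/
/-!
The fourth divided difference annihilates cubics, so for nodes `-1 < 0 < d < d + e < d + e + 1`
the weights `1 / ∏_{j ≠ i} (xᵢ - xⱼ)` give a linear relation between the cubes `(X + xᵢ)³`.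
These weights alternate in sign, so the two cubes at the nodes `0` and `d + e` (negative weights)
are a positive combination of the three others. Their ratio is `e : d`, so choosing `d, e` in the
ratio `b : a` and scaling `X = k p n` with `k s = d + e` rewrites `a(pn)³ + b(pn+s)³` as required,
with shift `t = -1`.
-/

lemma Rat.exists_nat_mul_eq_mul {a b : ℚ} (ha : 0 < a) (hb : 0 < b) :
    ∃ A B : ℕ, 0 < A ∧ 0 < B ∧ a * B = b * A := by
  set q := a / b
  have hq : 0 < q.num := Rat.num_pos.mpr (div_pos ha hb)
  refine ⟨q.num.toNat, q.den, by omega, q.den_pos, ?_⟩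
  have hA : ((q.num.toNat : ℕ) : ℚ) = q.num := by exact_mod_cast Int.toNat_of_nonneg hq.le
  rw [hA, ← Rat.mul_den_eq_num, ← mul_assoc, mul_div_cancel₀ a hb.ne']

lemma exists_pos_cube_weights {K : Type*} [Field K] [LinearOrder K] [IsStrictOrderedRing K]
    {a b d e k m : K} (ha : 0 < a) (hd : 0 < d) (he : 0 < e) (hk : 0 < k)
    (hm : d + e = k * m) (hab : a * d = b * e) :
    ∃ c₁ c₂ c₃ : K, 0 < c₁ ∧ 0 < c₂ ∧ 0 < c₃ ∧ ∀ x : K,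
      a * x ^ 3 + b * (x + m) ^ 3 =
        c₁ * (k * x - 1) ^ 3 + c₂ * (k * x + d) ^ 3 + c₃ * (k * x + (d + e + 1)) ^ 3 := by
  set lam := a * d * (d + e) * (d + e + 1) / k ^ 3
  have hlam : 0 < lam := by positivity
  refine ⟨lam / ((d + 1) * (d + e + 1) * (d + e + 2)), lam / (d * (d + 1) * e * (e + 1)),
    lam / ((d + e + 1) * (d + e + 2) * (e + 1)), by positivity, by positivity, by positivity,
    fun x => ?_⟩
  obtain rfl : b = a * d / e := by field_simp; linarith
  obtain rfl : m = (d + e) / k := by field_simp; linarith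
  simp only [lam]
  field_simp
  ring

/-- The `r = 0` case: `a(pn)³ + b(pn+s)³` with `0 < s < p` can be rewritten as a
3-transform of a shifted cube `(n+t)³`. -/
theorem stmt_9 (a b : ℚ) (ha : 0 < a) (hb : 0 < b) (p s : ℕ)
    (hs : 0 < s) (hsp : s < p) :
    ∃ k : ℕ, 0 < k ∧ ∃ t : ℤ, ∃ c₁ c₂ c₃ : ℚ, 0 < c₁ ∧ 0 < c₂ ∧ 0 < c₃ ∧
      ∃ i₁ i₂ i₃ : ℕ, i₁ ≠ i₂ ∧ i₁ ≠ i₃ ∧ i₂ ≠ i₃ ∧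
        i₁ < p*k ∧ i₂ < p*k ∧ i₃ < p*k ∧
        ∀ n : ℚ, a*((p:ℚ)*n)^3 + b*((p:ℚ)*n+s)^3 =
          c₁*((p:ℚ)*(k:ℚ)*n + i₁ + t)^3 + c₂*((p:ℚ)*(k:ℚ)*n + i₂ + t)^3
            + c₃*((p:ℚ)*(k:ℚ)*n + i₃ + t)^3 := by
  obtain ⟨A, B, hA, hB, hAB⟩ := Rat.exists_nat_mul_eq_mul ha hb
  obtain ⟨c₁, c₂, c₃, hc₁, hc₂, hc₃, hcubes⟩ :=
    exists_pos_cube_weights (b := b) (k := ((3 * (A + B) : ℕ) : ℚ)) (m := (s : ℚ))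
      (d := ((3 * B * s : ℕ) : ℚ)) (e := ((3 * A * s : ℕ) : ℚ)) ha
      (by positivity) (by positivity) (by positivity) (by push_cast; ring)
      (by push_cast; linear_combination 3 * s * hAB)
  have hk : 3 * (A + B) * (s + 1) ≤ p * (3 * (A + B)) := by
    rw [mul_comm p]; exact Nat.mul_le_mul_left _ hsp
  refine ⟨3 * (A + B), by omega, -1, c₁, c₂, c₃, hc₁, hc₂, hc₃,
    0, 3 * B * s + 1, 3 * B * s + 3 * A * s + 2, by omega, by omega, by omega,
    Nat.mul_pos (by omega) (by omega), by nlinarith, by nlinarith, fun n => ?_⟩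
  rw [hcubes]
  push_cast
  ring
end

section
/- Suppose n³ = Σ_{i=0}^{j-1} c_i (jn + i + jm)³ holds as an identity of polynomials in n, where j ≥ 1, m is a natural number, and the c_i are nonnegative rationals. Then at most one of the c_i is nonzero; moreover if c_i ≠ 0 then c_i·j³ = 1. -/
/-- `n³` cannot be a nonnegative combination of two or more distinct cubes of
arithmetic progressions of the same modulus: if
`n³ = Σ_{i<j} cᵢ (jn + i + jm)³` with `cᵢ ≥ 0`, then at most one `cᵢ` is
nonzero, and the nonzero one satisfies `cᵢ·j³ = 1`. -/
theorem stmt_11 (j m : ℕ) (hj : 1 ≤ j) (c : ℕ → ℚ) (hc : ∀ i, i < j → 0 ≤ c i)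
    (h : ∀ n : ℚ, n^3 = ∑ i ∈ Finset.range j, c i * ((j:ℚ)*n + i + (j:ℚ)*m)^3) :
    (∀ i₁ i₂, i₁ < j → i₂ < j → c i₁ ≠ 0 → c i₂ ≠ 0 → i₁ = i₂) ∧
    (∀ i, i < j → c i ≠ 0 → c i * (j:ℚ)^3 = 1) := by
  have h0 := h 0
  rw [show ((0:ℚ))^3 = 0 by norm_num] at h0
  have key : ∀ i, i < j → c i ≠ 0 → i = 0 ∧ m = 0 := by
    intro i hi hne
    have hterm : ∀ k ∈ Finset.range j, (0:ℚ) ≤ c k * ((j:ℚ)*0 + k + (j:ℚ)*m)^3 := by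
      intro k hk
      apply mul_nonneg (hc k (Finset.mem_range.mp hk))
      positivity
    have hz := (Finset.sum_eq_zero_iff_of_nonneg hterm).mp h0.symm i (Finset.mem_range.mpr hi)
    have h3 : ((j:ℚ)*0 + i + (j:ℚ)*m)^3 = 0 := by
      rcases mul_eq_zero.mp hz with h' | h'
      · exact absurd h' hne
      · exact h'
    have hb : ((j:ℚ)*0 + i + (j:ℚ)*m) = 0 := by
      exact pow_eq_zero_iff (by norm_num) |>.mp h3
    have hcast : ((i + j*m : ℕ) : ℚ) = 0 := by push_cast; linarith
    have hn : i + j*m = 0 := by exact_mod_cast hcast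
    constructor
    · omega
    · rcases Nat.eq_zero_of_add_eq_zero_left hn |> Nat.mul_eq_zero.mp with h' | h'
      · omega
      · exact h'
  constructor
  · intro i₁ i₂ h₁ h₂ hc₁ hc₂
    rw [(key i₁ h₁ hc₁).1, (key i₂ h₂ hc₂).1]
  · intro i hi hne
    obtain ⟨hi0, hm0⟩ := key i hi hne
    subst hi0; subst hm0
    have h1 := h 1
    rw [Finset.sum_eq_single 0] at h1
    · push_cast at h1; linarith
    · intro b hb hb0
      have hcb : c b = 0 := by
        by_contra hcb
        exact hb0 (key b (Finset.mem_range.mp hb) hcb).1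
      simp [hcb]
    · intro h'
      exact absurd (Finset.mem_range.mpr hi) h'
end

section
/- Let a, j, b, n₀, m be natural numbers with a, j ≥ 1 and b < a, and let c₀,…,c_{j−1} be nonnegative rationals such that (an + b + a·n₀)³ = Σ_{i=0}^{j−1} c_i(jn + i + jm)³ as polynomials in n. Then, setting t = ajm − jb − ajn₀ (an integer) and c'_{a·i} = c_i/a⁶ for i < j (and c'_l = 0 for other l < aj), we have n³ = Σ_{l=0}^{aj−1} c'_l (ajn + l + t)³ as polynomials in n, and the number of nonzero c'_l equals the number of nonzero c_i. -/
/-- Change of variables: from `(an + b + an₀)³ = Σ_{i<j} cᵢ(jn + i + jm)³` one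
obtains `n³ = Σ_{l<aj} c'ₗ (ajn + l + t)³` with `t = ajm − jb − ajn₀`,
`c'_{a·i} = cᵢ/a⁶`, preserving the number of nonzero coefficients. -/
theorem stmt_12 (a j b n₀ m : ℕ) (ha : 1 ≤ a) (hj : 1 ≤ j) (hba : b < a)
    (c : ℕ → ℚ) (hc : ∀ i, i < j → 0 ≤ c i)
    (h : ∀ n : ℚ, ((a:ℚ)*n + b + (a:ℚ)*n₀)^3
        = ∑ i ∈ Finset.range j, c i * ((j:ℚ)*n + i + (j:ℚ)*m)^3) :
    ∀ t : ℤ, t = (a:ℤ)*j*m - (j:ℤ)*b - (a:ℤ)*j*n₀ →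
    ∀ c' : ℕ → ℚ, (∀ i, i < j → c' (a*i) = c i / (a:ℚ)^6) →
      (∀ l, l < a*j → ¬ (a ∣ l) → c' l = 0) →
      (∀ l, l < a*j → a ∣ l → ¬ (l / a < j) → c' l = 0) →
      (∀ n : ℚ, n^3 = ∑ l ∈ Finset.range (a*j),
          c' l * ((a:ℚ)*(j:ℚ)*n + l + (t:ℚ))^3) ∧
      ((Finset.range (a*j)).filter (fun l => c' l ≠ 0)).card
        = ((Finset.range j).filter (fun i => c i ≠ 0)).card := by
  intro t ht c' h1 h2 h3
  have ha0 : a ≠ 0 := by omega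
  have haQ : (a:ℚ) ≠ 0 := Nat.cast_ne_zero.mpr ha0
  have htQ : (t:ℚ) = (a:ℚ)*j*m - (j:ℚ)*b - (a:ℚ)*j*n₀ := by
    rw [ht]; push_cast; ring
  have hsub : ((Finset.range j).image (fun i => a*i)) ⊆ Finset.range (a*j) := by
    intro l hl
    simp only [Finset.mem_image, Finset.mem_range] at hl ⊢
    obtain ⟨i, hi, rfl⟩ := hl
    exact (mul_lt_mul_iff_right₀ (show 0 < a by omega)).mpr hi
  have hinj : Function.Injective (fun i => a*i) := fun x y hxy => by
    simpa [ha0] using hxy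
  constructor
  · intro n
    have key := h ((a*n - b - a*n₀)/a)
    have lhs : (a:ℚ) * ((a*n - b - a*n₀)/a) + b + a*n₀ = a*n := by
      field_simp
      ring
    rw [lhs] at key
    have key2 : ∀ i ∈ Finset.range j,
        c i * ((j:ℚ)*((a*n - b - a*n₀)/a) + i + (j:ℚ)*m)^3
        = (a:ℚ)^3 * (c' (a*i) * ((a:ℚ)*(j:ℚ)*n + (a*i : ℕ) + (t:ℚ))^3) := by
      intro i hi
      rw [Finset.mem_range] at hi
      have harg : (j:ℚ)*((a*n - b - a*n₀)/a) + i + (j:ℚ)*m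
          = ((a:ℚ)*(j:ℚ)*n + (a*i : ℕ) + (t:ℚ))/a := by
        rw [htQ]; push_cast; field_simp; ring
      rw [harg, h1 i hi, div_pow]
      field_simp
    rw [Finset.sum_congr rfl key2, ← Finset.mul_sum] at key
    have hzero : ∀ l ∈ Finset.range (a*j),
        l ∉ (Finset.range j).image (fun i => a*i) →
        c' l * ((a:ℚ)*(j:ℚ)*n + l + (t:ℚ))^3 = 0 := by
      intro l hl hni
      rw [Finset.mem_range] at hl
      simp only [Finset.mem_image, Finset.mem_range, not_exists, not_and] at hni
      rcases em (a ∣ l) with ⟨k, rfl⟩ | hd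
      · have hk : ¬ k < j := fun hk => hni k hk rfl
        have : a * k / a = k := by
          rw [Nat.mul_div_cancel_left _ (by omega)]
        rw [h3 _ hl ⟨k, rfl⟩ (by rw [this]; exact hk), zero_mul]
      · rw [h2 _ hl hd, zero_mul]
    rw [← Finset.sum_subset hsub hzero, Finset.sum_image (fun x _ y _ hxy => hinj hxy)]
    refine mul_left_cancel₀ (pow_ne_zero 3 haQ) ?_
    calc (a:ℚ)^3 * n^3 = ((a:ℚ)*n)^3 := by ring
      _ = _ := key
  · have hset : (Finset.range (a*j)).filter (fun l => c' l ≠ 0)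
        = ((Finset.range j).filter (fun i => c i ≠ 0)).image (fun i => a*i) := by
      ext l
      simp only [Finset.mem_filter, Finset.mem_range, Finset.mem_image]
      constructor
      · rintro ⟨hl, hne⟩
        have hd : a ∣ l := by
          by_contra hd; exact hne (h2 _ hl hd)
        obtain ⟨k, rfl⟩ := hd
        have hka : a * k / a = k := Nat.mul_div_cancel_left _ (by omega)
        have hk : k < j := by
          by_contra hk; exact hne (h3 _ hl ⟨k, rfl⟩ (by rw [hka]; exact hk))
        refine ⟨k, ⟨hk, ?_⟩, rfl⟩
        intro hc0
        exact hne (by rw [h1 k hk, hc0, zero_div])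
      · rintro ⟨i, ⟨hi, hci⟩, rfl⟩
        refine ⟨(mul_lt_mul_iff_right₀ (show 0 < a by omega)).mpr hi, ?_⟩
        rw [h1 i hi]
        exact div_ne_zero hci (pow_ne_zero _ haQ)
    rw [hset, Finset.card_image_of_injective _ hinj]
end

section
/- Let f : ℕ → ℕ and define the infinite binary sequence ⟨f⟩ = 10^{f(0)} 1 0^{f(1)} 1 0^{f(2)} ⋯ (a 1 followed by f(i) zeros, for each i in order). Then ⟨f⟩ is ultimately periodic if and only if f is ultimately periodic (there exist N and p > 0 with f(n+p) = f(n) for all n ≥ N). -/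
open Classical

/-- The block encoding `⟨f⟩ = 10^{f(0)} 1 0^{f(1)} 1 0^{f(2)} ⋯`:
position `n` holds a `1` exactly when `n = i + Σ_{j<i} f j` for some `i`. -/
noncomputable def blockEncode (f : ℕ → ℕ) : ℕ → Bool :=
  fun n => if ∃ i : ℕ, n = i + ∑ j ∈ Finset.range i, f j then true else false

/-- A sequence is ultimately periodic. -/
def UltPeriodic {α : Type*} (σ : ℕ → α) : Prop :=
  ∃ N p : ℕ, 0 < p ∧ ∀ n, N ≤ n → σ (n + p) = σ n

/-- Positions of ones in the block encoding. -/
def partialS (f : ℕ → ℕ) (i : ℕ) : ℕ := i + ∑ j ∈ Finset.range i, f j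

lemma partialS_succ (f : ℕ → ℕ) (i : ℕ) :
    partialS f (i + 1) = partialS f i + (f i + 1) := by
  simp [partialS, Finset.sum_range_succ]; omega

lemma partialS_strictMono (f : ℕ → ℕ) : StrictMono (partialS f) := by
  apply strictMono_nat_of_lt_succ
  intro n
  rw [partialS_succ]
  omega

lemma blockEncode_true_iff (f : ℕ → ℕ) (n : ℕ) :
    blockEncode f n = true ↔ ∃ i, n = partialS f i := by
  simp [blockEncode, partialS]

lemma le_partialS (f : ℕ → ℕ) (i : ℕ) : i ≤ partialS f i := Nat.le_add_right _ _

lemma blockEncode_one (f : ℕ → ℕ) (i : ℕ) : blockEncode f (partialS f i) = true :=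
  (blockEncode_true_iff f _).2 ⟨i, rfl⟩

/-- `⟨f⟩` is ultimately periodic iff `f` is ultimately periodic. -/
theorem stmt_14 (f : ℕ → ℕ) :
    UltPeriodic (blockEncode f) ↔ UltPeriodic f := by
  constructor
  · rintro ⟨N, P, hP, hper⟩
    have hshift : ∀ i, N ≤ i → ∃ j, partialS f j = partialS f i + P := by
      intro i hi
      have h1 : blockEncode f (partialS f i + P) = true := by
        rw [hper _ (le_trans hi (le_partialS f i))]
        exact blockEncode_one f i
      obtain ⟨j, hj⟩ := (blockEncode_true_iff f _).1 h1
      exact ⟨j, hj.symm⟩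
    obtain ⟨j0, hj0⟩ := hshift N le_rfl
    have hj0gt : N < j0 := by
      have h1 : partialS f N < partialS f j0 := by omega
      exact (partialS_strictMono f).lt_iff_lt.1 h1
    set k := j0 - N with hk_def
    have hk : 0 < k := Nat.sub_pos_of_lt hj0gt
    have base : partialS f (N + k) = partialS f N + P := by
      have : N + k = j0 := by omega
      rw [this]; exact hj0
    have key : ∀ i, N ≤ i → partialS f (i + k) = partialS f i + P := by
      intro i hi
      induction i, hi using Nat.le_induction with
      | base => exact base
      | succ i hi ih =>
        obtain ⟨j, hj⟩ := hshift (i + 1) (by omega)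
        have hik : partialS f (i + k) < partialS f j := by
          have h2 : partialS f i < partialS f (i + 1) := partialS_strictMono f (by omega)
          omega
        have hjge : i + k + 1 ≤ j := (partialS_strictMono f).lt_iff_lt.1 hik
        have hle : partialS f (i + 1 + k) ≤ partialS f (i + 1) + P := by
          have h3 : partialS f (i + 1 + k) ≤ partialS f j := by
            apply (partialS_strictMono f).monotone
            omega
          omega
        have hge : partialS f (i + 1) + P ≤ partialS f (i + 1 + k) := by
          have hm' : partialS f (i + k) < partialS f (i + 1 + k) :=
            partialS_strictMono f (by omega)
          set m := partialS f (i + 1 + k) - P with hm_def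
          have hmP : m + P = partialS f (i + 1 + k) := by omega
          have hmN : N ≤ m := by
            have := le_partialS f i
            omega
          have hone : blockEncode f m = true := by
            rw [← hper m hmN, hmP]; exact blockEncode_one f _
          obtain ⟨j', hj'⟩ := (blockEncode_true_iff f _).1 hone
          have hij' : i < j' := by
            apply (partialS_strictMono f).lt_iff_lt.1
            omega
          have : partialS f (i + 1) ≤ partialS f j' :=
            (partialS_strictMono f).monotone hij'
          omega
        omega
    refine ⟨N, k, hk, ?_⟩
    intro n hn
    have h1 := key n hn
    have h2 := key (n + 1) (by omega)
    have h3 : partialS f (n + 1 + k) = partialS f (n + k) + (f (n + k) + 1) := by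
      have : n + 1 + k = (n + k) + 1 := by omega
      rw [this, partialS_succ]
    have h4 := partialS_succ f n
    omega
  · rintro ⟨N, p, hp, hper⟩
    set P := partialS f (N + p) - partialS f N with hP_def
    have hmono : partialS f N + p ≤ partialS f (N + p) := by
      have : ∑ j ∈ Finset.range N, f j ≤ ∑ j ∈ Finset.range (N + p), f j :=
        Finset.sum_le_sum_of_subset (Finset.range_subset_range.2 (by omega))
      simp only [partialS]; omega
    have hP : 0 < P := by omega
    have key : ∀ i, N ≤ i → partialS f (i + p) = partialS f i + P := by
      intro i hi
      induction i, hi using Nat.le_induction with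
      | base => omega
      | succ i hi ih =>
        have h1 : partialS f (i + 1 + p) = partialS f (i + p) + (f (i + p) + 1) := by
          have : i + 1 + p = (i + p) + 1 := by omega
          rw [this, partialS_succ]
        have h2 := partialS_succ f i
        have h3 : f (i + p) = f i := hper i hi
        omega
    refine ⟨partialS f N, P, hP, ?_⟩
    intro n hn
    have hiff : blockEncode f (n + P) = true ↔ blockEncode f n = true := by
      rw [blockEncode_true_iff, blockEncode_true_iff]
      constructor
      · rintro ⟨i, hi⟩
        have hNp : partialS f (N + p) ≤ partialS f i := by
          have := key N le_rfl
          omega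
        have hiNp : N + p ≤ i := (partialS_strictMono f).le_iff_le.1 hNp
        refine ⟨i - p, ?_⟩
        have : (i - p) + p = i := by omega
        have hk := key (i - p) (by omega)
        rw [this] at hk
        omega
      · rintro ⟨i, hi⟩
        have hNi : N ≤ i := by
          apply (partialS_strictMono f).le_iff_le.1
          omega
        exact ⟨i + p, by rw [key i hNi]; omega⟩
    by_cases h2 : blockEncode f n = true
    · rw [h2, hiff.2 h2]
    · have h3 : ¬ blockEncode f (n + P) = true := fun h => h2 (hiff.1 h)
      rw [Bool.not_eq_true] at h2 h3
      rw [h2, h3]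
end
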